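/- Let f be real-analytic near a simple root α with f'(x) ≠ 0 near α, and let ψ(x) = z - ((f(x)+f(z))/(f(x)-f(z)))·(f(z)/f'(x)) with z = x - f(x)/f'(x). Then there exist δ > 0 and C > 0 such that |ψ(x) - α| ≤ C|x - α|⁴ for all x with |x - α| < δ; in particular, the iteration x_{n+1} = ψ(x_n) converges to α with order at least 4 for x₀ sufficiently close to α. -/

import Mathlib

/-!
Write `f x = (x - α) * g x` with `g` analytic and `g α = f' α`. Then `f' = g + (x - α) g'`, the
Newton step `z` satisfies `z α = α` and `z' α = 0`, so `g x - g (z x) = (x - α) K x` with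
`K α = g' α`. In these terms the denominator of `ψ` is `f x - f (z x) = (x - α) D x / f' x` with
`D α = f' α ^ 2 ≠ 0`, and `ψ x - α = (x - α) ^ 3 g' x U x / (f' x ^ 2 D x)` for an analytic `U`
with `U α = 0`, whence `ψ x - α = O((x - α) ^ 4)`. Such a superlinear error makes `ψ` a
contraction towards `α` near `α`, which gives local convergence of the iteration.
-/

open Filter Topology Asymptotics

section Factorization

variable {𝕜 E : Type*} [NontriviallyNormedField 𝕜] [NormedAddCommGroup E] [NormedSpace 𝕜 E]
  {a : 𝕜}

theorem AnalyticAt.dslope {f : 𝕜 → E} (hf : AnalyticAt 𝕜 f a) :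
    AnalyticAt 𝕜 (_root_.dslope f a) a := by
  obtain ⟨p, hp⟩ := hf
  exact ⟨p.fslope, hp.has_fpower_series_dslope_fslope⟩

theorem AnalyticAt.exists_eq_sub_smul {f : 𝕜 → E} (hf : AnalyticAt 𝕜 f a) (ha : f a = 0) :
    ∃ g : 𝕜 → E, AnalyticAt 𝕜 g a ∧ g a = deriv f a ∧ ∀ x, f x = (x - a) • g x :=
  ⟨_root_.dslope f a, hf.dslope, dslope_same f a, fun x => (sub_smul_dslope_of_zero ha x).symm⟩

theorem AnalyticAt.exists_sub_comp_eq_sub_smul {g : 𝕜 → E} {z : 𝕜 → 𝕜} (hg : AnalyticAt 𝕜 g a)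
    (hz : AnalyticAt 𝕜 z a) (hza : z a = a) (hz' : deriv z a = 0) :
    ∃ K : 𝕜 → E, AnalyticAt 𝕜 K a ∧ K a = deriv g a ∧ ∀ x, g x - g (z x) = (x - a) • K x := by
  have hgz : AnalyticAt 𝕜 g (z a) := by rwa [hza]
  have hd : HasDerivAt (fun x => g x - g (z x)) (deriv g a - deriv z a • deriv g (z a)) a :=
    hg.differentiableAt.hasDerivAt.fun_sub
      (hgz.differentiableAt.hasDerivAt.scomp a hz.differentiableAt.hasDerivAt)
  have hsub : AnalyticAt 𝕜 (fun x => g x - g (z x)) a := hg.fun_sub (hgz.comp hz)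
  obtain ⟨K, hK, hKa, hgK⟩ := hsub.exists_eq_sub_smul (by simp [hza])
  exact ⟨K, hK, by rw [hKa, hd.deriv, hz', zero_smul, sub_zero], hgK⟩

end Factorization

section CompositeNewton

variable {𝕜 : Type*} [NontriviallyNormedField 𝕜] {f : 𝕜 → 𝕜} {a : 𝕜}

noncomputable def newtonStep (f : 𝕜 → 𝕜) (x : 𝕜) : 𝕜 := x - f x / deriv f x

noncomputable def compositeNewton (f : 𝕜 → 𝕜) (x : 𝕜) : 𝕜 :=
  newtonStep f x - (f x + f (newtonStep f x)) / (f x - f (newtonStep f x)) *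
    (f (newtonStep f x) / deriv f x)

theorem newtonStep_of_root (hroot : f a = 0) : newtonStep f a = a := by
  simp [newtonStep, hroot]

theorem AnalyticAt.newtonStep [CompleteSpace 𝕜] (hf : AnalyticAt 𝕜 f a) (hf' : deriv f a ≠ 0) :
    AnalyticAt 𝕜 (newtonStep f) a :=
  analyticAt_id.sub (hf.div hf.deriv hf')

theorem deriv_newtonStep_of_root [CompleteSpace 𝕜] (hf : AnalyticAt 𝕜 f a) (hroot : f a = 0)
    (hf' : deriv f a ≠ 0) : deriv (newtonStep f) a = 0 := by
  have h : HasDerivAt (newtonStep f)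
      (1 - (deriv f a * deriv f a - f a * deriv (deriv f) a) / deriv f a ^ 2) a :=
    (hasDerivAt_id a).fun_sub (hf.differentiableAt.hasDerivAt.fun_div
      hf.deriv.differentiableAt.hasDerivAt hf')
  rw [h.deriv, hroot]
  field_simp
  ring

-- Read `e = x - α`, `w = z x - α`, `G = g x`, `G' = g' x`, `F = f' x`, `Q = g (z x)`; then
-- `e * G - w * Q = f x - f (z x) = e * D / F`.
-- At `e = 0` the left side vanishes through `0 / 0 = 0`.
theorem compositeNewton_identity {L : Type*} [Field L] {e w G G' K F Q D V : L}
    (hw : w = e - e * G / F) (hF : F = G + e * G') (hQ : Q = G - e * K)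
    (hD : D = G * F - e * G' * Q)
    (hV : e * V = G * (G' + K) * F - G' * Q * (F + Q)) (hF0 : F ≠ 0) (hD0 : D ≠ 0) :
    w - (e * G + w * Q) / (e * G - w * Q) * (w * Q / F) = e ^ 4 * (G' * V / (F ^ 2 * D)) := by
  subst hw
  rcases eq_or_ne e 0 with rfl | he
  · simp
  have hsub : e * G - (e - e * G / F) * Q = e * D / F := by
    rw [hD, eq_div_iff hF0]
    field_simp
    linear_combination (-Q) * hF
  rw [hsub]
  have hV' : V = (G * (G' + K) * F - G' * Q * (F + Q)) / e := by
    rw [eq_div_iff he, mul_comm, hV]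
  rw [hV']
  subst hF hQ hD
  field_simp
  ring

theorem deriv_of_eq_sub_mul {g : 𝕜 → 𝕜} (hfg : ∀ y, f y = (y - a) * g y) {x : 𝕜}
    (hg : DifferentiableAt 𝕜 g x) : deriv f x = g x + (x - a) * deriv g x := by
  have h : HasDerivAt (fun y => (y - a) * g y) (1 * g x + (x - a) * deriv g x) x :=
    ((hasDerivAt_id x).sub_const a).mul hg.hasDerivAt
  rw [show f = fun y => (y - a) * g y from funext hfg, h.deriv, one_mul]

theorem exists_compositeNewton_sub_eq_pow_four_mul [CompleteSpace 𝕜] (hf : AnalyticAt 𝕜 f a)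
    (hroot : f a = 0) (hf' : deriv f a ≠ 0) :
    ∃ W : 𝕜 → 𝕜, ContinuousAt W a ∧ ∀ᶠ x in 𝓝 a, compositeNewton f x - a = (x - a) ^ 4 * W x := by
  obtain ⟨g, hg, hga, hfg⟩ := hf.exists_eq_sub_smul hroot
  simp only [smul_eq_mul] at hfg
  set z := newtonStep f with hz_def
  have hz : AnalyticAt 𝕜 z a := hf.newtonStep hf'
  have hza : z a = a := newtonStep_of_root hroot
  obtain ⟨K, hK, hKa, hgK⟩ := hg.exists_sub_comp_eq_sub_smul hz hza
    (deriv_newtonStep_of_root hf hroot hf')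
  simp only [smul_eq_mul] at hgK
  have hgz : AnalyticAt 𝕜 (fun x => g (z x)) a := by
    have : AnalyticAt 𝕜 g (z a) := by rwa [hza]
    exact this.comp hz
  have hf'_eq : ∀ᶠ x in 𝓝 a, deriv f x = g x + (x - a) * deriv g x := by
    filter_upwards [hg.eventually_analyticAt] with x hx
    exact deriv_of_eq_sub_mul hfg hx.differentiableAt
  set D : 𝕜 → 𝕜 := fun x => g x * deriv f x - (x - a) * deriv g x * g (z x)
  have hD : AnalyticAt 𝕜 D a :=
    (hg.fun_mul hf.deriv).fun_sub
      (((analyticAt_id.fun_sub analyticAt_const).fun_mul hg.deriv).fun_mul hgz)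
  have hDa : D a = deriv f a * deriv f a := by simp [D, hga]
  set U : 𝕜 → 𝕜 := fun x =>
    g x * (deriv g x + K x) * deriv f x - deriv g x * g (z x) * (deriv f x + g (z x))
  have hU : AnalyticAt 𝕜 U a :=
    ((hg.fun_mul (hg.deriv.fun_add hK)).fun_mul hf.deriv).fun_sub
      ((hg.deriv.fun_mul hgz).fun_mul (hf.deriv.fun_add hgz))
  have hUa : U a = 0 := by simp only [U, hza, hga, hKa]; ring
  obtain ⟨V, hV, -, hUV⟩ := hU.exists_eq_sub_smul hUa
  refine ⟨fun x => deriv g x * V x / (deriv f x ^ 2 * D x), ?_, ?_⟩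
  · exact (hg.deriv.continuousAt.mul hV.continuousAt).div
      ((hf.deriv.continuousAt.pow 2).mul hD.continuousAt) (by rw [hDa]; simp [hf'])
  · filter_upwards [hf'_eq, hf.deriv.continuousAt.eventually_ne hf',
      hD.continuousAt.eventually_ne (hDa ▸ mul_ne_zero hf' hf')] with x hFx hF0 hD0
    have hzx : z x - a = (x - a) - (x - a) * g x / deriv f x := by
      rw [hz_def, newtonStep, hfg x]; ring
    rw [compositeNewton, ← hz_def, sub_right_comm, hfg x, hfg (z x)]
    exact compositeNewton_identity hzx hFx (by rw [← hgK x]; ring) rfl (hUV x).symm hF0 hD0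

theorem compositeNewton_sub_isBigO [CompleteSpace 𝕜] (hf : AnalyticAt 𝕜 f a) (hroot : f a = 0)
    (hf' : deriv f a ≠ 0) :
    (fun x => compositeNewton f x - a) =O[𝓝 a] fun x => (x - a) ^ 4 := by
  obtain ⟨W, hW, hEq⟩ := exists_compositeNewton_sub_eq_pow_four_mul hf hroot hf'
  simpa using EventuallyEq.trans_isBigO hEq
    ((isBigO_refl (fun x => (x - a) ^ 4) _).mul (hW.isBigO_one 𝕜))

end CompositeNewton

section Iteration

variable {E F : Type*} [NormedAddCommGroup E] [NormedAddCommGroup F] {a : E}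

theorem Asymptotics.IsBigO.exists_pos_bound_of_dist_lt {f g : E → F} (h : f =O[𝓝 a] g) :
    ∃ δ > 0, ∃ C > 0, ∀ x, dist x a < δ → ‖f x‖ ≤ C * ‖g x‖ := by
  obtain ⟨C, hC, hfg⟩ := h.exists_pos
  obtain ⟨δ, hδ, hball⟩ := Metric.eventually_nhds_iff.1 hfg.bound
  exact ⟨δ, hδ, C, hC, fun x hx => hball hx⟩

theorem exists_forall_tendsto_iterate_of_isLittleO {T : E → E}
    (h : (fun x => T x - a) =o[𝓝 a] fun x => x - a) :
    ∃ δ > 0, ∀ x, dist x a < δ → Tendsto (fun n => T^[n] x) atTop (𝓝 a) := by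
  obtain ⟨δ, hδ, hball⟩ := Metric.eventually_nhds_iff.1 (h.def (by norm_num : (0 : ℝ) < 1 / 2))
  refine ⟨δ, hδ, fun x hx => ?_⟩
  have hgeom : ∀ n : ℕ, ‖T^[n] x - a‖ ≤ (1 / 2) ^ n * ‖x - a‖ := by
    intro n
    induction n with
    | zero => simp
    | succ n ih =>
      have hn : dist (T^[n] x) a < δ := by
        rw [dist_eq_norm]
        calc ‖T^[n] x - a‖ ≤ (1 / 2) ^ n * ‖x - a‖ := ih
          _ ≤ ‖x - a‖ :=
            mul_le_of_le_one_left (norm_nonneg _) (pow_le_one₀ (by norm_num) (by norm_num))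
          _ < δ := by rwa [← dist_eq_norm]
      rw [Function.iterate_succ_apply', pow_succ']
      calc ‖T (T^[n] x) - a‖ ≤ 1 / 2 * ‖T^[n] x - a‖ := hball hn
        _ ≤ 1 / 2 * ((1 / 2) ^ n * ‖x - a‖) := by gcongr
        _ = _ := by ring
  rw [← tendsto_sub_nhds_zero_iff]
  refine squeeze_zero_norm hgeom ?_
  simpa using (tendsto_pow_atTop_nhds_zero_of_lt_one (by norm_num : (0 : ℝ) ≤ 1 / 2)
    (by norm_num)).mul_const ‖x - a‖

end Iteration

theorem composed_newton_order_four_general (f : ℝ → ℝ) (α : ℝ)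
    (hf : AnalyticAt ℝ f α) (hroot : f α = 0) (hf' : deriv f α ≠ 0)
    (z ψ : ℝ → ℝ)
    (hz : ∀ x, z x = x - f x / deriv f x)
    (hψ : ∀ x, ψ x = z x - ((f x + f (z x)) / (f x - f (z x))) * (f (z x) / deriv f x)) :
    (∃ δ > 0, ∃ C > 0, ∀ x : ℝ, |x - α| < δ → |ψ x - α| ≤ C * |x - α| ^ 4) ∧
    (∃ δ' > 0, ∀ x₀ : ℝ, |x₀ - α| < δ' →
      Filter.Tendsto (fun n => ψ^[n] x₀) Filter.atTop (nhds α)) := by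
  obtain rfl : z = newtonStep f := funext hz
  obtain rfl : ψ = compositeNewton f := funext hψ
  have hO := compositeNewton_sub_isBigO hf hroot hf'
  have ho : (fun x => compositeNewton f x - α) =o[𝓝 α] fun x => x - α :=
    hO.trans_isLittleO ((isLittleO_pow_id (by norm_num : 1 < 4)).comp_tendsto
      (tendsto_sub_nhds_zero_iff.2 tendsto_id))
  obtain ⟨δ, hδ, C, hC, hbound⟩ := hO.exists_pos_bound_of_dist_lt
  obtain ⟨δ', hδ', hconv⟩ := exists_forall_tendsto_iterate_of_isLittleO ho
  simp only [Real.dist_eq, Real.norm_eq_abs, abs_pow] at hbound hconv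
  exact ⟨⟨δ, hδ, C, hC, hbound⟩, ⟨δ', hδ', hconv⟩⟩

theorem composed_newton_order_four (f : ℝ → ℝ) (α : ℝ)
    (hf : AnalyticAt ℝ f α) (hroot : f α = 0) (hf' : deriv f α ≠ 0)
    (hreg : ∀ᶠ x in nhds α, deriv f x ≠ 0)
    (z ψ : ℝ → ℝ)
    (hz : ∀ x, z x = x - f x / deriv f x)
    (hψ : ∀ x, ψ x = z x - ((f x + f (z x)) / (f x - f (z x))) * (f (z x) / deriv f x))
    (hne : ∀ᶠ x in nhdsWithin α {α}ᶜ, f x ≠ f (z x)) :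
    (∃ δ > 0, ∃ C > 0, ∀ x : ℝ, |x - α| < δ → |ψ x - α| ≤ C * |x - α| ^ 4) ∧
    (∃ δ' > 0, ∀ x₀ : ℝ, |x₀ - α| < δ' →
      Filter.Tendsto (fun n => ψ^[n] x₀) Filter.atTop (nhds α)) :=
  composed_newton_order_four_general f α hf hroot hf' z ψ hz hψ
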